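/- For a prime p, the independence number of the intersection graph of D_{2p^2} equals p^2 + 1. -/

import Mathlib

open DihedralGroup Subgroup

/-- The intersection graph of a group: vertices are the proper non-trivial
subgroups, two distinct subgroups are adjacent iff their intersection is
non-trivial. -/
def interGraph (G : Type*) [Group G] :
    SimpleGraph {H : Subgroup G // H ≠ ⊥ ∧ H ≠ ⊤} where
  Adj H K := H ≠ K ∧ H.1 ⊓ K.1 ≠ ⊥
  symm := ⟨fun H K h => ⟨h.1.symm, by rw [inf_comm]; exact h.2⟩⟩
  loopless := ⟨fun H h => h.1 rfl⟩

/-- The vertex type of the intersection graph of `DihedralGroup n`. -/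
abbrev Vert (n : ℕ) := {H : Subgroup (DihedralGroup n) // H ≠ ⊥ ∧ H ≠ ⊤}

/-- The degree of a vertex in the intersection graph of `DihedralGroup n`. -/
noncomputable def deg (n : ℕ) (v : Vert n) : ℕ :=
  Nat.card ((interGraph (DihedralGroup n)).neighborSet v)

/-- The eccentricity of a vertex in the intersection graph of `DihedralGroup n`. -/
noncomputable def ecc (n : ℕ) (v : Vert n) : ℕ :=
  sSup (Set.range fun u => (interGraph (DihedralGroup n)).dist v u)


lemma r_pow' {m : ℕ} (i : ZMod m) (k : ℕ) : (r i : DihedralGroup m) ^ k = r ((k : ZMod m) * i) := by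
  induction k with
  | zero => simp [one_def, -r_zero]
  | succ k ih =>
      rw [pow_succ, ih, r_mul_r]
      congr 1
      push_cast
      ring

lemma mem_zpowers_sr {m : ℕ} (i : ZMod m) (x : DihedralGroup m) :
    x ∈ zpowers (sr i) ↔ x = 1 ∨ x = sr i := by
  constructor
  · rintro ⟨k, rfl⟩
    simp only
    rw [← zpow_mod_orderOf, orderOf_sr]
    rcases Int.emod_two_eq k with h | h <;>
      simp only [Nat.cast_ofNat, h]
    · left; simp
    · right; simp
  · rintro (rfl | rfl)
    · exact one_mem _
    · exact mem_zpowers _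

lemma key (p : ℕ) (hp : p.Prime) (i : ZMod (p^2)) (hi : i ≠ 0) :
    ∃ m : ZMod (p^2), m * i = (p : ZMod (p^2)) := by
  haveI : NeZero (p^2) := ⟨pow_ne_zero 2 hp.ne_zero⟩
  set d := Nat.gcd i.val (p^2) with hd
  have hdvd : d ∣ p^2 := Nat.gcd_dvd_right _ _
  have hivpos : 0 < i.val := by
    rcases Nat.eq_zero_or_pos i.val with h | h
    · exact absurd ((ZMod.val_eq_zero i).mp h) hi
    · exact h
  have hdle : d ≤ i.val := Nat.le_of_dvd hivpos (Nat.gcd_dvd_left _ _)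
  have hdne : d ≠ p^2 := by have := ZMod.val_lt i; omega
  have hdp : d ∣ p := by
    obtain ⟨j, hj2, hjd⟩ := (Nat.dvd_prime_pow hp).mp hdvd
    interval_cases j
    · simp [hjd]
    · simp [hjd]
    · exact absurd hjd hdne
  obtain ⟨t, ht⟩ := hdp
  have hbez : (d : ℤ) = i.val * Nat.gcdA i.val (p^2) + (p^2 : ℕ) * Nat.gcdB i.val (p^2) :=
    Nat.gcd_eq_gcd_ab _ _
  have h0 : ((p^2 : ℕ) : ZMod (p^2)) = 0 := ZMod.natCast_self _
  have hcast : (d : ZMod (p^2)) = i * (Nat.gcdA i.val (p^2) : ZMod (p^2)) := by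
    have h := congrArg (Int.cast : ℤ → ZMod (p^2)) hbez
    push_cast at h
    rw [ZMod.natCast_val, ZMod.cast_id] at h
    rw [h]
    have : ((p : ZMod (p^2)))^2 = 0 := by rw [← Nat.cast_pow]; exact h0
    rw [this]
    ring
  refine ⟨(t : ZMod _) * (Nat.gcdA i.val (p^2) : ZMod _), ?_⟩
  have : (p : ZMod (p^2)) = (d : ZMod (p^2)) * t := by rw [← Nat.cast_mul, ← ht]
  rw [this, hcast]
  ring

lemma r_zpow' {m : ℕ} (i : ZMod m) (k : ℤ) :
    (r i : DihedralGroup m) ^ k = r ((k : ZMod m) * i) := by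
  have hinv : ∀ j : ZMod m, (r j : DihedralGroup m)⁻¹ = r (-j) := fun j => rfl
  cases k with
  | ofNat k => rw [Int.ofNat_eq_coe, zpow_natCast, r_pow']; push_cast; ring_nf
  | negSucc k =>
      rw [zpow_negSucc, r_pow', hinv]
      congr 1
      push_cast [Int.negSucc_eq]
      ring

lemma not_sr_mem_zpowers_r {m : ℕ} (i j : ZMod m) : sr j ∉ zpowers (r i) := by
  rintro ⟨k, hk⟩
  simp only at hk
  rw [r_zpow'] at hk
  exact absurd hk (by simp)

lemma classify (p : ℕ) (hp : p.Prime) (H : Subgroup (DihedralGroup (p^2))) (hH : H ≠ ⊥) :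
    (r (p : ZMod (p^2)) ∈ H) ∨ ∃ i, H = zpowers (sr i) := by
  by_cases hrot : ∃ j : ZMod (p^2), j ≠ 0 ∧ r j ∈ H
  · left
    obtain ⟨j, hj, hjH⟩ := hrot
    obtain ⟨m, hm⟩ := key p hp j hj
    have h2 := H.pow_mem hjH m.val
    rw [r_pow'] at h2
    haveI : NeZero (p^2) := ⟨pow_ne_zero 2 hp.ne_zero⟩
    rwa [ZMod.natCast_val, ZMod.cast_id, hm] at h2
  · right
    push_neg at hrot
    have hr0 : ∀ j : ZMod (p^2), r j ∈ H → j = 0 := by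
      intro j hj
      by_contra h
      exact hrot j h hj
    obtain ⟨⟨x, hxH⟩, hx1⟩ := Subgroup.ne_bot_iff_exists_ne_one.mp hH
    have hx1 : x ≠ 1 := fun h => hx1 (Subtype.ext h)
    cases x with
    | r j => exact absurd (congrArg r (hr0 j hxH)) hx1
    | sr i =>
        refine ⟨i, le_antisymm ?_ ?_⟩
        · intro x hx
          rw [mem_zpowers_sr]
          cases x with
          | r j =>
              left
              rw [hr0 j hx, one_def]
          | sr j =>
              right
              have : sr j * sr i ∈ H := H.mul_mem hx hxH
              rw [sr_mul_sr] at this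
              have := hr0 _ this
              have hji : j = i := by
                have h' : i - j = 0 := this
                exact (sub_eq_zero.mp h').symm
              exact congrArg sr hji
        · intro x hx
          rw [mem_zpowers_sr] at hx
          rcases hx with rfl | rfl
          · exact H.one_mem
          · exact hxH



lemma zpowers_ne_top {G : Type*} [Group G] (g : G) (h : orderOf g ≠ Nat.card G) :
    zpowers g ≠ ⊤ := by
  intro ht
  apply h
  rw [← Nat.card_zpowers, ht]
  exact Nat.card_congr Subgroup.topEquiv.toEquiv

theorem stmt7 (p : ℕ) (hp : p.Prime) :
    IsGreatest {n : ℕ | ∃ S : Set (Vert (p ^ 2)),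
      (∀ u ∈ S, ∀ v ∈ S, ¬ (interGraph (DihedralGroup (p ^ 2))).Adj u v) ∧
      Nat.card S = n} (p ^ 2 + 1) := by
  classical
  haveI : NeZero (p^2) := ⟨pow_ne_zero 2 hp.ne_zero⟩
  have hp2 : 2 ≤ p := hp.two_le
  have hplt : p < p^2 := by nlinarith
  set a : DihedralGroup (p^2) := r (p : ZMod (p^2)) with ha
  have ha1 : a ≠ 1 := by
    rw [ha, one_def]
    intro h
    have h0 : (p : ZMod (p^2)) = 0 := by injection h
    have := congrArg ZMod.val h0
    rw [ZMod.val_natCast_of_lt hplt, ZMod.val_zero] at this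
    omega
  have hcard : Nat.card (DihedralGroup (p^2)) = 2 * p^2 := DihedralGroup.nat_card
  have hordA : orderOf a = p := by
    rw [ha, orderOf_r, ZMod.val_natCast_of_lt hplt,
      Nat.gcd_eq_right (dvd_pow_self p two_ne_zero), pow_two,
      Nat.mul_div_cancel_left _ hp.pos]
  have hbotA : (zpowers a : Subgroup (DihedralGroup (p^2))) ≠ ⊥ := by
    simpa [Subgroup.zpowers_eq_bot] using ha1
  have htopA : (zpowers a : Subgroup (DihedralGroup (p^2))) ≠ ⊤ := by
    apply zpowers_ne_top
    rw [hordA, hcard]; nlinarith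
  have hbotS : ∀ i : ZMod (p^2), zpowers (sr i) ≠ ⊥ := by
    intro i
    simp [Subgroup.zpowers_eq_bot, one_def, -r_zero]
  have htopS : ∀ i : ZMod (p^2), zpowers (sr i) ≠ ⊤ := by
    intro i
    apply zpowers_ne_top
    rw [orderOf_sr, hcard]; nlinarith
  set f : Option (ZMod (p^2)) → Vert (p^2) := fun o =>
    o.elim ⟨zpowers a, hbotA, htopA⟩ (fun i => ⟨zpowers (sr i), hbotS i, htopS i⟩) with hf
  have hfinj : Function.Injective f := by
    rintro (_ | i) (_ | j) h
    · rfl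
    · exfalso
      have h1 : (zpowers a : Subgroup (DihedralGroup (p^2))) = zpowers (sr j) :=
        congrArg Subtype.val h
      have : sr j ∈ zpowers a := h1 ▸ mem_zpowers _
      exact not_sr_mem_zpowers_r _ _ this
    · exfalso
      have h1 : (zpowers (sr i) : Subgroup (DihedralGroup (p^2))) = zpowers a :=
        congrArg Subtype.val h
      have : sr i ∈ zpowers a := h1 ▸ mem_zpowers (sr i)
      exact not_sr_mem_zpowers_r _ _ this
    · have h1 : (zpowers (sr i) : Subgroup (DihedralGroup (p^2))) = zpowers (sr j) :=
        congrArg Subtype.val h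
      have : sr i ∈ zpowers (sr j) := h1 ▸ mem_zpowers (sr i)
      rw [mem_zpowers_sr] at this
      rcases this with h2 | h2
      · exact absurd h2 (by simp [one_def, -r_zero])
      · injection h2 with h3
        rw [h3]
  constructor
  · -- membership: the witness set
    refine ⟨Set.range f, ?_, ?_⟩
    · rintro u ⟨o1, rfl⟩ v ⟨o2, rfl⟩ hadj
      obtain ⟨hne, hinf⟩ := hadj
      apply hinf
      rw [Subgroup.eq_bot_iff_forall]
      intro x hx
      rw [Subgroup.mem_inf] at hx
      obtain ⟨hx1, hx2⟩ := hx
      match o1, o2 with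
      | none, none => exact absurd rfl hne
      | none, some j =>
          simp only [hf, Option.elim] at hx1 hx2
          rw [mem_zpowers_sr] at hx2
          rcases hx2 with rfl | rfl
          · rfl
          · exact absurd hx1 (not_sr_mem_zpowers_r _ _)
      | some i, none =>
          simp only [hf, Option.elim] at hx1 hx2
          rw [mem_zpowers_sr] at hx1
          rcases hx1 with rfl | rfl
          · rfl
          · exact absurd hx2 (not_sr_mem_zpowers_r _ _)
      | some i, some j =>
          simp only [hf, Option.elim] at hx1 hx2
          rw [mem_zpowers_sr] at hx1 hx2
          rcases hx1 with rfl | rfl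
          · rfl
          · rcases hx2 with h2 | h2
            · exact h2
            · injection h2 with h3
              exact absurd (by rw [h3]) hne
    · rw [Nat.card_range_of_injective hfinj,
        Nat.card_eq_fintype_card, Fintype.card_option, ZMod.card]
  · -- upper bound
    rintro n ⟨S, hind, rfl⟩
    set g : S → Option (ZMod (p^2)) := fun v =>
      if h : ∃ i, v.1.1 = zpowers (sr i) then some h.choose else none with hg
    have hginj : Function.Injective g := by
      intro v w hvw
      by_cases hv : ∃ i, v.1.1 = zpowers (sr i) <;>
        by_cases hw : ∃ i, w.1.1 = zpowers (sr i)
      · rw [hg] at hvw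
        simp only [dif_pos hv, dif_pos hw, Option.some.injEq] at hvw
        have : v.1.1 = w.1.1 := by rw [hv.choose_spec, hw.choose_spec, hvw]
        exact Subtype.ext (Subtype.ext this)
      · rw [hg] at hvw; simp [dif_pos hv, dif_neg hw] at hvw
      · rw [hg] at hvw; simp [dif_neg hv, dif_pos hw] at hvw
      · have hva : a ∈ v.1.1 := (classify p hp v.1.1 v.1.2.1).resolve_right hv
        have hwa : a ∈ w.1.1 := (classify p hp w.1.1 w.1.2.1).resolve_right hw
        by_contra hne
        have hne1 : v.1 ≠ w.1 := fun h => hne (Subtype.ext h)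
        have hnadj := hind v.1 v.2 w.1 w.2
        rw [interGraph] at hnadj
        simp only [ne_eq, not_and, not_not] at hnadj
        have hbot := hnadj hne1
        have : a ∈ v.1.1 ⊓ w.1.1 := Subgroup.mem_inf.mpr ⟨hva, hwa⟩
        rw [hbot, Subgroup.mem_bot] at this
        exact ha1 this
    calc Nat.card S ≤ Nat.card (Option (ZMod (p^2))) :=
          Nat.card_le_card_of_injective g hginj
      _ = p^2 + 1 := by
          rw [Nat.card_eq_fintype_card, Fintype.card_option, ZMod.card]
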